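/- Suppose α : ℤ^d → (0,1) is such that ν_α is stationary for the translation-invariant exclusion process on ℤ^d, and u₁, …, u_k ∈ ℤ^d satisfy p(u_i) > 0 for 1 ≤ i ≤ k. For each i set λ_i = p(u_i)/p(−u_i) if p(−u_i) > 0, and λ_i = 1 if p(−u_i) = 0. Then there exist ρ₁, …, ρ_k with ρ_i ∈ {λ_i, 1} for each i, such that π(n₁u₁ + ⋯ + n_k u_k) = π(0)·ρ₁^{n₁}⋯ρ_k^{n_k} for all integers n₁, …, n_k. -/

import Mathlib

open MeasureTheory Filter Topology

namespace ExclusionPaper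

abbrev Zd (d : ℕ) := Fin d → ℤ

abbrev Conf (d : ℕ) := Zd d → Bool

noncomputable def ind (b : Bool) : ℝ := if b then 1 else 0

def swap {d : ℕ} (η : Conf d) (x y : Zd d) : Conf d :=
  fun z => if z = x then η y else if z = y then η x else η z

def IsCylinder {d : ℕ} (f : Conf d → ℝ) : Prop :=
  ∃ F : Finset (Zd d), ∀ η η' : Conf d, (∀ x ∈ F, η x = η' x) → f η = f η'

noncomputable def gen {d : ℕ} (p : Zd d → ℝ) (f : Conf d → ℝ) (η : Conf d) : ℝ :=
  ∑' x : Zd d, ∑' y : Zd d,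
    p (y - x) * ind (η x) * (1 - ind (η y)) * (f (swap η x y) - f η)

def IsStationary {d : ℕ} (p : Zd d → ℝ) (μ : Measure (Conf d)) : Prop :=
  ∀ f : Conf d → ℝ, IsCylinder f → ∫ η, gen p f η ∂μ = 0

def IsProductWith {d : ℕ} (α : Zd d → ℝ) (μ : Measure (Conf d)) : Prop :=
  IsProbabilityMeasure μ ∧
  ∀ F : Finset (Zd d), ∀ b : Zd d → Bool,
    μ {η : Conf d | ∀ x ∈ F, η x = b x} =
      ∏ x ∈ F, ENNReal.ofReal (if b x then α x else 1 - α x)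

noncomputable def pifun {d : ℕ} (α : Zd d → ℝ) (x : Zd d) : ℝ := α x / (1 - α x)

def innerZ {d : ℕ} (x y : Zd d) : ℤ := ∑ i, x i * y i

noncomputable def innerR {d : ℕ} (x : Zd d) (v : Fin d → ℝ) : ℝ := ∑ i, (x i : ℝ) * v i

/-!
Testing stationarity against `η a` and against `(η a - α a) (η b - α b)` shows that the mean flow
of particles into a site equals the flow out of it, and that two sites with different densities are
in detailed balance, `p (y - x) π x = p (x - y) π y`. So `π (x + t)` is either `π x` or
`p t / p (-t) * π x`, and the flow balance says that the drift of `p` over each level set of `π`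
vanishes. If `π` is flat at `x` in a direction `u` with `p u ≠ p (-u)`, the drifts over the level
sets of `x` and of `x + u` differ termwise by terms of one sign, so they agree term by term; hence
flatness along `u` passes to every neighbour of `x` and then to the whole lattice spanned by the
`u i`. On that lattice each `u i` therefore multiplies `π` by a constant `ρ i ∈ {1, λ i}`.
-/

section Generator

variable {d : ℕ}

lemma ind_mul_one_sub_self (b : Bool) : ind b * (1 - ind b) = 0 := by
  cases b <;> simp [ind]

lemma ind_nonneg (b : Bool) : 0 ≤ ind b := by
  cases b <;> simp [ind]

lemma ind_le_one (b : Bool) : ind b ≤ 1 := by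
  cases b <;> simp [ind]

lemma measurable_ind (x : Zd d) : Measurable fun η : Conf d => ind (η x) :=
  (Measurable.of_discrete (f := ind)).comp (measurable_pi_apply x)

lemma measurable_swap (x y : Zd d) : Measurable fun η : Conf d => swap η x y := by
  refine measurable_pi_lambda (fun η : Conf d => swap η x y) fun z => ?_
  by_cases hx : z = x
  · simp only [swap, if_pos hx]; exact measurable_pi_apply y
  · by_cases hy : z = y
    · simp only [swap, if_neg hx, if_pos hy]; exact measurable_pi_apply x
    · simp only [swap, if_neg hx, if_neg hy]; exact measurable_pi_apply z

lemma swap_apply_of_ne {η : Conf d} {x y z : Zd d} (hx : z ≠ x) (hy : z ≠ y) :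
    swap η x y z = η z := by
  simp [swap, hx, hy]

namespace IsCylinder

variable {f : Conf d → ℝ}

lemma exists_factor (hf : IsCylinder f) :
    ∃ (F : Finset (Zd d)) (g : (F → Bool) → ℝ), ∀ η, f η = g fun z => η z := by
  classical
  obtain ⟨F, hF⟩ := hf
  refine ⟨F, fun w => f fun z => if h : z ∈ F then w ⟨z, h⟩ else false, fun η => ?_⟩
  exact hF _ _ fun x hx => by simp [hx]

lemma measurable (hf : IsCylinder f) : Measurable f := by
  obtain ⟨F, g, hg⟩ := hf.exists_factor
  rw [funext hg]
  exact Measurable.of_discrete.comp (measurable_pi_lambda _ fun z => measurable_pi_apply _)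

lemma exists_abs_le (hf : IsCylinder f) : ∃ C, ∀ η, |f η| ≤ C := by
  obtain ⟨F, g, hg⟩ := hf.exists_factor
  exact ⟨∑ w, |g w|, fun η => hg η ▸
    Finset.single_le_sum (f := fun w => |g w|) (fun _ _ => abs_nonneg _) (Finset.mem_univ _)⟩

end IsCylinder

noncomputable def jumpRate (p : Zd d → ℝ) (η : Conf d) (x y : Zd d) : ℝ :=
  p (y - x) * ind (η x) * (1 - ind (η y))

variable {p : Zd d → ℝ}

lemma measurable_jumpRate (x y : Zd d) : Measurable fun η : Conf d => jumpRate p η x y :=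
  (measurable_const.mul (measurable_ind x)).mul (measurable_const.sub (measurable_ind y))

lemma jumpRate_nonneg (hp0 : ∀ z, 0 ≤ p z) (η : Conf d) (x y : Zd d) : 0 ≤ jumpRate p η x y := by
  unfold jumpRate
  cases η x <;> cases η y <;> simp [ind, hp0]

lemma jumpRate_le (hp0 : ∀ z, 0 ≤ p z) (η : Conf d) (x y : Zd d) :
    jumpRate p η x y ≤ p (y - x) := by
  unfold jumpRate
  cases η x <;> cases η y <;> simp [ind, hp0]

lemma jumpRate_self (η : Conf d) (x : Zd d) : jumpRate p η x x = 0 := by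
  simp [jumpRate, mul_assoc, ind_mul_one_sub_self]

lemma jumpRate_mul_ind_swap (η : Conf d) (x y z : Zd d) :
    jumpRate p η x y * ind (swap η x y z)
      = jumpRate p η x y * (ind (η z) + ((if z = y then 1 else 0) - if z = x then 1 else 0)) := by
  by_cases hxy : x = y
  · simp [hxy, jumpRate_self]
  unfold jumpRate
  by_cases hx : z = x
  · subst hx; cases h₁ : η z <;> cases h₂ : η y <;> simp [swap, ind, hxy, h₂]
  · by_cases hy : z = y
    · subst hy; cases h₁ : η x <;> cases h₂ : η z <;> simp [swap, ind, hx, h₁]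
    · simp [swap_apply_of_ne hx hy, hx, hy]

lemma abs_jumpRate_mul_sub_le (hp0 : ∀ z, 0 ≤ p z) {f : Conf d → ℝ} {C : ℝ}
    (hC : ∀ η, |f η| ≤ C) (η : Conf d) (x y : Zd d) :
    |jumpRate p η x y * (f (swap η x y) - f η)| ≤ 2 * C * p (y - x) := by
  have hΔ : |f (swap η x y) - f η| ≤ 2 * C := by
    linarith [abs_sub (f (swap η x y)) (f η), hC (swap η x y), hC η]
  rw [abs_mul, abs_of_nonneg (jumpRate_nonneg hp0 η x y), mul_comm (2 * C)]
  exact mul_le_mul (jumpRate_le hp0 η x y) hΔ (abs_nonneg _) (hp0 _)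

lemma jumpRate_mul_sub_eq_zero {F : Finset (Zd d)} {f : Conf d → ℝ}
    (hF : ∀ η η' : Conf d, (∀ x ∈ F, η x = η' x) → f η = f η') (η : Conf d) {x y : Zd d}
    (hx : x ∉ F) (hy : y ∉ F) : jumpRate p η x y * (f (swap η x y) - f η) = 0 := by
  have hfix : f (swap η x y) = f η := hF _ _ fun z hz =>
    swap_apply_of_ne (fun h => hx (h ▸ hz)) (fun h => hy (h ▸ hz))
  rw [hfix, sub_self, mul_zero]

lemma abs_tsum_jumpRate_mul_sub_le (hp0 : ∀ z, 0 ≤ p z) (hp : Summable p)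
    {F : Finset (Zd d)} {f : Conf d → ℝ} {C : ℝ}
    (hF : ∀ η η' : Conf d, (∀ x ∈ F, η x = η' x) → f η = f η') (hC : ∀ η, |f η| ≤ C)
    (η : Conf d) (x : Zd d) :
    |∑' y, jumpRate p η x y * (f (swap η x y) - f η)|
      ≤ 2 * C * ∑ y ∈ F, p (y - x) + if x ∈ F then 2 * C * ∑' z, p z else 0 := by
  classical
  by_cases hx : x ∈ F
  · have hsum : ∑' y, 2 * C * p (y - x) = 2 * C * ∑' z, p z := by
      rw [tsum_mul_left]
      exact congrArg _ ((Equiv.subRight x).tsum_eq p)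
    have hF0 : 0 ≤ 2 * C * ∑ y ∈ F, p (y - x) :=
      mul_nonneg (by linarith [abs_nonneg (f η), hC η]) (Finset.sum_nonneg fun _ _ => hp0 _)
    have hpx : Summable fun y => 2 * C * p (y - x) :=
      ((Equiv.subRight x).summable_iff.mpr hp).mul_left _
    have hbound : |∑' y, jumpRate p η x y * (f (swap η x y) - f η)| ≤ 2 * C * ∑' z, p z :=
      hsum ▸ tsum_of_norm_bounded (f := fun y => jumpRate p η x y * (f (swap η x y) - f η))
        hpx.hasSum (abs_jumpRate_mul_sub_le hp0 hC η x)
    rw [if_pos hx]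
    exact hbound.trans (le_add_of_nonneg_left hF0)
  · rw [tsum_eq_sum (s := F) fun y hy => jumpRate_mul_sub_eq_zero hF η hx hy, if_neg hx,
      add_zero, Finset.mul_sum]
    exact (Finset.abs_sum_le_sum_abs _ _).trans
      (Finset.sum_le_sum fun y _ => abs_jumpRate_mul_sub_le hp0 hC η x y)

variable {μ : Measure (Conf d)} [IsProbabilityMeasure μ]

lemma integral_abs_le_of_abs_le {g : Conf d → ℝ} {c : ℝ} (h : ∀ η, |g η| ≤ c) :
    ∫ η, |g η| ∂μ ≤ c := by
  calc ∫ η, |g η| ∂μ ≤ ∫ _, c ∂μ :=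
        integral_mono_of_nonneg (ae_of_all _ fun _ => abs_nonneg _) (integrable_const c)
          (ae_of_all _ h)
    _ = c := by simp

theorem integral_gen (hp0 : ∀ z, 0 ≤ p z) (hp : Summable p) {f : Conf d → ℝ}
    (hf : IsCylinder f) :
    ∫ η, gen p f η ∂μ = ∑' x, ∑' y, ∫ η, jumpRate p η x y * (f (swap η x y) - f η) ∂μ := by
  classical
  have hfm := hf.measurable
  obtain ⟨C, hC⟩ := hf.exists_abs_le
  obtain ⟨F, hF⟩ := hf
  set T : Zd d → Zd d → Conf d → ℝ := fun x y η => jumpRate p η x y * (f (swap η x y) - f η)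
  have hTm (x y : Zd d) : Measurable (T x y) :=
    (measurable_jumpRate x y).mul ((hfm.comp (measurable_swap x y)).sub hfm)
  have hinner (x : Zd d) : ∫ η, ∑' y, T x y η ∂μ = ∑' y, ∫ η, T x y η ∂μ :=
    (integral_tsum_of_summable_integral_norm
      (fun y => Integrable.of_bound (hTm x y).aestronglyMeasurable _
        (ae_of_all _ fun η => abs_jumpRate_mul_sub_le hp0 hC η x y))
      ((((Equiv.subRight x).summable_iff.mpr hp).mul_left (2 * C)).of_nonneg_of_le
        (fun _ => integral_nonneg fun _ => norm_nonneg _)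
        (fun y => integral_abs_le_of_abs_le fun η => abs_jumpRate_mul_sub_le hp0 hC η x y))).symm
  have hB : Summable fun x => 2 * C * ∑ y ∈ F, p (y - x) + if x ∈ F then 2 * C * ∑' z, p z else 0 :=
    ((summable_sum fun y _ => (Equiv.subLeft y).summable_iff.mpr hp).mul_left _).add
      (summable_of_ne_finset_zero (s := F) fun x hx => if_neg hx)
  have hBle := abs_tsum_jumpRate_mul_sub_le hp0 hp hF hC
  calc ∫ η, gen p f η ∂μ = ∫ η, ∑' x, ∑' y, T x y η ∂μ := rfl
    _ = ∑' x, ∫ η, ∑' y, T x y η ∂μ :=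
      (integral_tsum_of_summable_integral_norm
        (fun x => Integrable.of_bound (Measurable.tsum (hTm x)).aestronglyMeasurable _
          (ae_of_all _ (hBle · x)))
        (hB.of_nonneg_of_le (fun _ => integral_nonneg fun _ => norm_nonneg _)
          (fun x => integral_abs_le_of_abs_le (hBle · x)))).symm
    _ = ∑' x, ∑' y, ∫ η, T x y η ∂μ := tsum_congr hinner

end Generator

section ProductMeasure

variable {d : ℕ} {α : Zd d → ℝ} {μ : Measure (Conf d)}

lemma integral_prod_ind (hα : ∀ x, α x ∈ Set.Icc (0 : ℝ) 1) (hμ : IsProductWith α μ)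
    (F : Finset (Zd d)) (b : Zd d → Bool) :
    ∫ η, ∏ x ∈ F, (if b x then ind (η x) else 1 - ind (η x)) ∂μ
      = ∏ x ∈ F, (if b x then α x else 1 - α x) := by
  classical
  set S := {η : Conf d | ∀ x ∈ F, η x = b x}
  have hS : MeasurableSet S := by
    have hS : S = ⋂ x ∈ F, {η | η x = b x} := by ext; simp [S]
    rw [hS]
    exact Finset.measurableSet_biInter _ fun x _ =>
      measurableSet_eq_fun (measurable_pi_apply x) measurable_const
  have hfactor (η : Conf d) (x : Zd d) :
      (if b x then ind (η x) else 1 - ind (η x)) = if η x = b x then 1 else 0 := by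
    cases b x <;> cases η x <;> simp [ind]
  have hind : (fun η => ∏ x ∈ F, (if b x then ind (η x) else 1 - ind (η x))) = S.indicator 1 := by
    funext η
    simp [hfactor, Finset.prod_boole, Set.indicator_apply, S]
  rw [hind, integral_indicator_one hS, measureReal_def, hμ.2, ENNReal.toReal_prod]
  refine Finset.prod_congr rfl fun x _ => ENNReal.toReal_ofReal ?_
  split_ifs <;> linarith [(hα x).1, (hα x).2]

noncomputable def meanJumpRate (p α : Zd d → ℝ) (x y : Zd d) : ℝ := p (y - x) * α x * (1 - α y)

variable {p : Zd d → ℝ} {x y : Zd d}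

lemma integrable_jumpRate [IsFiniteMeasure μ] (x y : Zd d) :
    Integrable (fun η => jumpRate p η x y) μ :=
  Integrable.of_bound (measurable_jumpRate x y).aestronglyMeasurable |p (y - x)|
    (ae_of_all _ fun η => by
      rw [Real.norm_eq_abs, jumpRate, abs_mul, abs_mul]
      cases η x <;> cases η y <;> simp [ind])

lemma integral_jumpRate (hα : ∀ x, α x ∈ Set.Icc (0 : ℝ) 1) (hμ : IsProductWith α μ)
    (hxy : x ≠ y) : ∫ η, jumpRate p η x y ∂μ = meanJumpRate p α x y := by
  classical
  have h := integral_prod_ind hα hμ {x, y} fun z => decide (z = x)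
  simp only [Finset.prod_pair hxy, decide_eq_true_eq, if_true, if_neg hxy.symm] at h
  simp only [jumpRate, mul_assoc, integral_const_mul, h, meanJumpRate]

lemma integral_jumpRate_mul_ind (hα : ∀ x, α x ∈ Set.Icc (0 : ℝ) 1) (hμ : IsProductWith α μ)
    {z : Zd d} (hxy : x ≠ y) (hzx : z ≠ x) (hzy : z ≠ y) :
    ∫ η, jumpRate p η x y * ind (η z) ∂μ = meanJumpRate p α x y * α z := by
  classical
  have h := integral_prod_ind hα hμ {x, y, z} fun w => decide (w ≠ y)
  simp only [Finset.prod_insert (show x ∉ ({y, z} : Finset (Zd d)) by simp [hxy, hzx.symm]),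
    Finset.prod_pair hzy.symm, decide_eq_true_eq, ne_eq, not_true, if_false, if_pos hxy,
    if_pos hzy] at h
  calc ∫ η, jumpRate p η x y * ind (η z) ∂μ
      = ∫ η, p (y - x) * (ind (η x) * ((1 - ind (η y)) * ind (η z))) ∂μ := by
        simp only [jumpRate, mul_assoc]
    _ = meanJumpRate p α x y * α z := by
        rw [integral_const_mul, h, meanJumpRate]; ring

lemma jumpRate_mul_ind_sub (η : Conf d) (x y z : Zd d) (c : ℝ) :
    jumpRate p η x y * (ind (η z) - c)
      = jumpRate p η x y * ((if z = x then 1 else if z = y then 0 else ind (η z)) - c) := by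
  by_cases hzx : z = x
  · subst hzx; cases h : η z <;> simp [jumpRate, ind, h]
  · by_cases hzy : z = y
    · subst hzy; cases h : η z <;> simp [jumpRate, ind, h, hzx]
    · simp [hzx, hzy]

lemma integral_jumpRate_mul_ind_sub (hα : ∀ x, α x ∈ Set.Icc (0 : ℝ) 1) (hμ : IsProductWith α μ)
    (hxy : x ≠ y) (z : Zd d) :
    ∫ η, jumpRate p η x y * (ind (η z) - α z) ∂μ
      = meanJumpRate p α x y * (if z = x then 1 - α z else if z = y then -α z else 0) := by
  have := hμ.1
  simp_rw [jumpRate_mul_ind_sub _ x y z]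
  by_cases hzx : z = x
  · simp only [if_pos hzx, integral_mul_const, integral_jumpRate hα hμ hxy]
  by_cases hzy : z = y
  · simp only [if_neg hzx, if_pos hzy, zero_sub, mul_neg, integral_neg, integral_mul_const,
      integral_jumpRate hα hμ hxy]
  have hint : Integrable (fun η => jumpRate p η x y * ind (η z)) μ :=
    (integrable_jumpRate x y).mul_bdd (measurable_ind z).aestronglyMeasurable
      (ae_of_all _ fun η => (abs_of_nonneg (ind_nonneg _)).trans_le (ind_le_one _))
  simp only [if_neg hzx, if_neg hzy, mul_sub,
    integral_sub hint ((integrable_jumpRate x y).mul_const _),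
    integral_mul_const, integral_jumpRate hα hμ hxy, integral_jumpRate_mul_ind hα hμ hxy hzx hzy,
    sub_self, mul_zero]

end ProductMeasure

section Stationary

variable {d : ℕ} {p α : Zd d → ℝ} {μ : Measure (Conf d)}

lemma meanJumpRate_nonneg (hp0 : ∀ z, 0 ≤ p z) (hα : ∀ x, α x ∈ Set.Icc (0 : ℝ) 1)
    (x y : Zd d) : 0 ≤ meanJumpRate p α x y :=
  mul_nonneg (mul_nonneg (hp0 _) (hα x).1) (sub_nonneg.2 (hα y).2)

lemma meanJumpRate_le (hp0 : ∀ z, 0 ≤ p z) (hα : ∀ x, α x ∈ Set.Icc (0 : ℝ) 1)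
    (x y : Zd d) : meanJumpRate p α x y ≤ p (y - x) := by
  have h : α x * (1 - α y) ≤ 1 := by nlinarith [(hα x).1, (hα x).2, (hα y).1, (hα y).2]
  calc meanJumpRate p α x y = p (y - x) * (α x * (1 - α y)) := mul_assoc _ _ _
    _ ≤ p (y - x) * 1 := mul_le_mul_of_nonneg_left h (hp0 _)
    _ = p (y - x) := mul_one _

lemma summable_meanJumpRate_right (hp0 : ∀ z, 0 ≤ p z) (hp : Summable p)
    (hα : ∀ x, α x ∈ Set.Icc (0 : ℝ) 1) (x : Zd d) : Summable (meanJumpRate p α x) :=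
  ((Equiv.subRight x).summable_iff.mpr hp).of_nonneg_of_le (meanJumpRate_nonneg hp0 hα x)
    (meanJumpRate_le hp0 hα x)

lemma summable_meanJumpRate_left (hp0 : ∀ z, 0 ≤ p z) (hp : Summable p)
    (hα : ∀ x, α x ∈ Set.Icc (0 : ℝ) 1) (y : Zd d) : Summable (meanJumpRate p α · y) :=
  ((Equiv.subLeft y).summable_iff.mpr hp).of_nonneg_of_le (meanJumpRate_nonneg hp0 hα · y)
    (meanJumpRate_le hp0 hα · y)

lemma integral_jumpRate_mul_ind_change (hα : ∀ x, α x ∈ Set.Icc (0 : ℝ) 1)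
    (hμ : IsProductWith α μ) (a x y : Zd d) :
    ∫ η, jumpRate p η x y * (ind (swap η x y a) - ind (η a)) ∂μ
      = (if y = a then meanJumpRate p α x a else 0)
        - (if x = a then 1 else 0) * meanJumpRate p α x y := by
  by_cases hxy : x = y
  · subst hxy; by_cases hx : x = a <;> simp [jumpRate_self, hx]
  have hpt (η : Conf d) : jumpRate p η x y * (ind (swap η x y a) - ind (η a))
      = ((if a = y then 1 else 0) - if a = x then 1 else 0) * jumpRate p η x y := by
    rw [mul_sub, jumpRate_mul_ind_swap]; ring
  simp only [hpt, integral_const_mul, integral_jumpRate hα hμ hxy]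
  by_cases hy : y = a
  · subst hy; simp [hxy, Ne.symm hxy]
  · simp [hy, Ne.symm hy, eq_comm (a := a)]

theorem tsum_meanJumpRate_in_eq_out (hp0 : ∀ z, 0 ≤ p z) (hp : Summable p)
    (hα : ∀ x, α x ∈ Set.Icc (0 : ℝ) 1) (hμ : IsProductWith α μ) (hstat : IsStationary p μ)
    (a : Zd d) : ∑' x, meanJumpRate p α x a = ∑' y, meanJumpRate p α a y := by
  have := hμ.1
  have hcyl : IsCylinder fun η : Conf d => ind (η a) :=
    ⟨{a}, fun η η' h => congrArg ind (h a (Finset.mem_singleton_self a))⟩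
  have hinner (x : Zd d) : ∑' y, ((if y = a then meanJumpRate p α x a else 0)
      - (if x = a then 1 else 0) * meanJumpRate p α x y)
      = meanJumpRate p α x a - if x = a then ∑' y, meanJumpRate p α a y else 0 := by
    rw [Summable.tsum_sub (hasSum_ite_eq a _).summable
      ((summable_meanJumpRate_right hp0 hp hα x).mul_left _), tsum_ite_eq, tsum_mul_left]
    split_ifs with hx
    · rw [hx, one_mul]
    · rw [zero_mul]
  have h := hstat _ hcyl
  rw [integral_gen hp0 hp hcyl, tsum_congr fun x =>
    tsum_congr (integral_jumpRate_mul_ind_change hα hμ a x), tsum_congr hinner,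
    Summable.tsum_sub (summable_meanJumpRate_left hp0 hp hα a) (hasSum_ite_eq a _).summable,
    tsum_ite_eq] at h
  exact sub_eq_zero.1 h

lemma isCylinder_centered_pair (α : Zd d → ℝ) (a b : Zd d) :
    IsCylinder fun η : Conf d => (ind (η a) - α a) * (ind (η b) - α b) :=
  ⟨{a, b}, fun η η' h => by simp only [h a (by simp), h b (by simp)]⟩

lemma jumpRate_mul_centered_pair_swap (η : Conf d) (x y a b : Zd d) (c₁ c₂ : ℝ) :
    let δ : Zd d → ℝ := fun z => (if z = y then 1 else 0) - if z = x then 1 else 0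
    jumpRate p η x y * ((ind (swap η x y a) - c₁) * (ind (swap η x y b) - c₂)
        - (ind (η a) - c₁) * (ind (η b) - c₂))
      = δ a * (jumpRate p η x y * (ind (η b) - c₂)) + δ b * (jumpRate p η x y * (ind (η a) - c₁))
        + δ a * δ b * jumpRate p η x y := by
  intro δ
  linear_combination (ind (swap η x y b) - c₂) * jumpRate_mul_ind_swap (p := p) η x y a
    + (ind (η a) + δ a - c₁) * jumpRate_mul_ind_swap (p := p) η x y b

lemma integrable_jumpRate_mul_ind_sub [IsFiniteMeasure μ] (hα : ∀ x, α x ∈ Set.Icc (0 : ℝ) 1)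
    (x y z : Zd d) : Integrable (fun η => jumpRate p η x y * (ind (η z) - α z)) μ :=
  (integrable_jumpRate x y).mul_bdd ((measurable_ind z).sub measurable_const).aestronglyMeasurable
    (ae_of_all _ fun _ =>
      abs_sub_le_of_nonneg_of_le (ind_nonneg _) (ind_le_one _) (hα z).1 (hα z).2)

-- In expectation only the jumps between `a` and `b` change `(η a - α a) (η b - α b)`.
lemma integral_jumpRate_mul_centered_pair_change (hα : ∀ x, α x ∈ Set.Icc (0 : ℝ) 1)
    (hμ : IsProductWith α μ) {a b : Zd d} (hab : a ≠ b) (x y : Zd d) :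
    ∫ η, jumpRate p η x y * ((ind (swap η x y a) - α a) * (ind (swap η x y b) - α b)
      - (ind (η a) - α a) * (ind (η b) - α b)) ∂μ
      = (if b = y then (if a = x then meanJumpRate p α a b * (α b - α a) else 0) else 0)
        + (if a = y then (if b = x then meanJumpRate p α b a * (α a - α b) else 0) else 0) := by
  have := hμ.1
  by_cases hxy : x = y
  · subst hxy; by_cases hxa : a = x <;> by_cases hxb : b = x <;> simp_all [jumpRate_self]
  have ha := (integrable_jumpRate_mul_ind_sub (μ := μ) (p := p) hα x y a).const_mul
  have hb := (integrable_jumpRate_mul_ind_sub (μ := μ) (p := p) hα x y b).const_mul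
  simp only [jumpRate_mul_centered_pair_swap]
  rw [integral_add _ ((integrable_jumpRate x y).const_mul _), integral_add (hb _) (ha _),
    integral_const_mul, integral_const_mul, integral_const_mul,
    integral_jumpRate_mul_ind_sub hα hμ hxy, integral_jumpRate_mul_ind_sub hα hμ hxy,
    integral_jumpRate hα hμ hxy]
  · by_cases hxa : a = x <;> by_cases hya : a = y <;> by_cases hxb : b = x <;>
      by_cases hyb : b = y <;> simp_all <;> ring
  · exact (hb _).add (ha _)

theorem sub_mul_sub_meanJumpRate_eq_zero (hp0 : ∀ z, 0 ≤ p z) (hp : Summable p)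
    (hα : ∀ x, α x ∈ Set.Icc (0 : ℝ) 1) (hμ : IsProductWith α μ) (hstat : IsStationary p μ)
    {a b : Zd d} (hab : a ≠ b) :
    (α a - α b) * (meanJumpRate p α b a - meanJumpRate p α a b) = 0 := by
  have := hμ.1
  have hpair (c e : Zd d) (C E : ℝ) :
      ∑' y, ((if c = y then C else 0) + if e = y then E else 0) = C + E := by
    rw [Summable.tsum_add (hasSum_ite_eq' c C).summable (hasSum_ite_eq' e E).summable,
      tsum_ite_eq', tsum_ite_eq']
  have h := hstat _ (isCylinder_centered_pair α a b)
  rw [integral_gen hp0 hp (isCylinder_centered_pair α a b),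
    tsum_congr fun x => (tsum_congr (integral_jumpRate_mul_centered_pair_change hα hμ hab x)).trans
      (hpair _ _ _ _), hpair] at h
  linear_combination h

end Stationary

section Density

variable {d : ℕ} {p α : Zd d → ℝ} {μ : Measure (Conf d)}

lemma pifun_pos (hα : ∀ x, α x ∈ Set.Ioo (0 : ℝ) 1) (x : Zd d) : 0 < pifun α x :=
  div_pos (hα x).1 (sub_pos.2 (hα x).2)

lemma pifun_eq_pifun_iff (hα : ∀ x, α x ∈ Set.Ioo (0 : ℝ) 1) {x y : Zd d} :
    pifun α x = pifun α y ↔ α x = α y := by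
  have hx : 1 - α x ≠ 0 := (sub_pos.2 (hα x).2).ne'
  have hy : 1 - α y ≠ 0 := (sub_pos.2 (hα y).2).ne'
  rw [pifun, pifun, div_eq_div_iff hx hy]
  constructor
  · intro h; linarith
  · intro h; rw [h]

theorem pifun_add_eq_or_balance (hp0 : ∀ z, 0 ≤ p z) (hp : Summable p)
    (hα : ∀ x, α x ∈ Set.Ioo (0 : ℝ) 1) (hμ : IsProductWith α μ) (hstat : IsStationary p μ)
    (x t : Zd d) :
    pifun α (x + t) = pifun α x ∨ p t * pifun α x = p (-t) * pifun α (x + t) := by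
  by_cases ht : t = 0
  · left; rw [ht, add_zero]
  have hne : x ≠ x + t := fun h => ht (left_eq_add.mp h)
  have h := sub_mul_sub_meanJumpRate_eq_zero hp0 hp (fun z => Set.Ioo_subset_Icc_self (hα z))
    hμ hstat hne
  rcases mul_eq_zero.1 h with h | h
  · exact Or.inl ((pifun_eq_pifun_iff hα).2 (sub_eq_zero.1 h).symm)
  · right
    have hx : 1 - α x ≠ 0 := (sub_pos.2 (hα x).2).ne'
    have hxt : 1 - α (x + t) ≠ 0 := (sub_pos.2 (hα (x + t)).2).ne'
    simp only [meanJumpRate, sub_add_cancel_left, add_sub_cancel_left] at h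
    rw [pifun, pifun]
    field_simp
    linear_combination -h

-- Flux balance at `x`, where by detailed balance only the level set of `x` contributes.
theorem tsum_levelSet_drift_eq_zero (hp0 : ∀ z, 0 ≤ p z) (hp : Summable p)
    (hα : ∀ x, α x ∈ Set.Ioo (0 : ℝ) 1) (hμ : IsProductWith α μ) (hstat : IsStationary p μ)
    (x : Zd d) :
    ∑' z, (if pifun α z = pifun α x then p (x - z) - p (z - x) else 0) = 0 := by
  have hα' (z : Zd d) : α z ∈ Set.Icc (0 : ℝ) 1 := Set.Ioo_subset_Icc_self (hα z)
  have hflow := tsum_meanJumpRate_in_eq_out hp0 hp hα' hμ hstat x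
  rw [← sub_eq_zero, ← Summable.tsum_sub (summable_meanJumpRate_left hp0 hp hα' x)
    (summable_meanJumpRate_right hp0 hp hα' x)] at hflow
  have hpt (z : Zd d) : meanJumpRate p α z x - meanJumpRate p α x z
      = α x * (1 - α x) * (if pifun α z = pifun α x then p (x - z) - p (z - x) else 0) := by
    split_ifs with hz
    · rw [meanJumpRate, meanJumpRate, (pifun_eq_pifun_iff hα).1 hz]; ring
    · have hzx : z ≠ x := fun h => hz (h ▸ rfl)
      have h := sub_mul_sub_meanJumpRate_eq_zero hp0 hp hα' hμ hstat hzx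
      rw [mul_zero, ← neg_sub, neg_eq_zero]
      exact (mul_eq_zero.1 h).resolve_left
        (sub_ne_zero.2 fun h => hz ((pifun_eq_pifun_iff hα).2 h))
  rw [tsum_congr hpt, tsum_mul_left] at hflow
  exact (mul_eq_zero.1 hflow).resolve_left
    (mul_pos (hα x).1 (sub_pos.2 (hα x).2)).ne'

end Density

lemma sub_mul_sub_nonpos_of_mul_eq_mul {A B C D : ℝ} (hA : 0 ≤ A) (hB : 0 ≤ B) (hC : 0 ≤ C)
    (hD : 0 ≤ D) (h : A * C = B * D) : (A - B) * (C - D) ≤ 0 := by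
  rcases le_or_gt A B with hAB | hAB <;> rcases le_or_gt C D with hCD | hCD
  · nlinarith [mul_le_mul hAB hCD hC hB]
  · exact mul_nonpos_of_nonpos_of_nonneg (sub_nonpos.2 hAB) (sub_nonneg.2 hCD.le)
  · exact mul_nonpos_of_nonneg_of_nonpos (sub_nonneg.2 hAB.le) (sub_nonpos.2 hCD)
  · nlinarith [mul_le_mul hAB.le hCD.le hD hA]

section LevelSets

variable {G : Type*} [AddCommGroup G] {p π : G → ℝ}

lemma pos_and_apply_add_eq_div_mul (hp0 : ∀ z, 0 ≤ p z) (hπ : ∀ x, 0 < π x)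
    (hdich : ∀ x t, π (x + t) = π x ∨ p t * π x = p (-t) * π (x + t))
    {y w : G} (hw : 0 < p w) (hy : π (y + w) ≠ π y) :
    0 < p (-w) ∧ π (y + w) = p w / p (-w) * π y := by
  have h := (hdich y w).resolve_left hy
  have hneg : 0 < p (-w) := (hp0 (-w)).lt_of_ne fun h0 => by
    rw [← h0, zero_mul] at h
    exact (mul_pos hw (hπ y)).ne' h
  refine ⟨hneg, ?_⟩
  rw [div_mul_eq_mul_div, eq_div_iff hneg.ne', h, mul_comm]

lemma apply_add_eq_of_neg_eq (hp0 : ∀ z, 0 ≤ p z) (hπ : ∀ x, 0 < π x)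
    (hdich : ∀ x t, π (x + t) = π x ∨ p t * π x = p (-t) * π (x + t))
    {w : G} (hw : 0 < p w) (hsymm : p (-w) = p w) (y : G) : π (y + w) = π y := by
  by_contra hy
  have h := (pos_and_apply_add_eq_div_mul hp0 hπ hdich hw hy).2
  rw [hsymm, div_self hw.ne', one_mul] at h
  exact hy h

-- A nonzero term forces detailed balance along `u` and along `w - x`; together these fix its sign.
lemma levelSet_shift_term_nonneg (hp0 : ∀ z, 0 ≤ p z) (hπ : ∀ x, 0 < π x)
    (hdich : ∀ x t, π (x + t) = π x ∨ p t * π x = p (-t) * π (x + t))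
    {u x : G} (hx : π (x + u) = π x) (w : G) :
    0 ≤ (p u - p (-u)) * ((if π (w + u) = π (x + u) then p (x - w) - p (w - x) else 0)
      - if π w = π x then p (x - w) - p (w - x) else 0) := by
  have balance (y t : G) (h : π (y + t) ≠ π y) : p t * π y = p (-t) * π (y + t) :=
    (hdich y t).resolve_left h
  have hsign := sub_mul_sub_nonpos_of_mul_eq_mul (hp0 u) (hp0 (-u)) (hp0 (x - w)) (hp0 (w - x))
  have hsign' := sub_mul_sub_nonpos_of_mul_eq_mul (hp0 u) (hp0 (-u)) (hp0 (w - x)) (hp0 (x - w))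
  have hxw : x + (w - x) = w := add_sub_cancel x w
  have hxuw : x + u + (w - x) = w + u := by abel
  split_ifs with h₁ h₂ h₂
  · simp
  · have e₁ := balance w u (by rw [h₁, hx]; exact Ne.symm h₂)
    have e₂ := balance x (w - x) (by rw [hxw]; exact h₂)
    rw [hxw, neg_sub] at e₂
    rw [h₁, hx] at e₁
    have key : p u * p (w - x) = p (-u) * p (x - w) := mul_right_cancel₀ (hπ x).ne' (by
      linear_combination p u * e₂ + p (x - w) * e₁)
    nlinarith [hsign' key]
  · have e₁ := balance w u (by rw [h₂, ← hx]; exact h₁)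
    have e₂ := balance (x + u) (w - x) (by rw [hxuw]; exact h₁)
    rw [hxuw, neg_sub, hx] at e₂
    rw [h₂] at e₁
    have key : p u * p (x - w) = p (-u) * p (w - x) := mul_right_cancel₀ (hπ x).ne' (by
      linear_combination p (x - w) * e₁ - p (-u) * e₂)
    nlinarith [hsign key]
  · simp

-- The drifts over the level sets of `x + u` and of `x` both vanish, and they differ termwise by
-- terms of one sign.
lemma levelSet_shift (hp0 : ∀ z, 0 ≤ p z) (hp : Summable p) (hπ : ∀ x, 0 < π x)
    (hdich : ∀ x t, π (x + t) = π x ∨ p t * π x = p (-t) * π (x + t))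
    (hdrift : ∀ x, ∑' z, (if π z = π x then p (x - z) - p (z - x) else 0) = 0)
    {u x : G} (hu : p u ≠ p (-u)) (hx : π (x + u) = π x) (w : G) :
    (if π (w + u) = π (x + u) then p (x - w) - p (w - x) else 0)
      = if π w = π x then p (x - w) - p (w - x) else 0 := by
  have hbound (P : Prop) [Decidable P] (w : G) :
      ‖if P then p (x - w) - p (w - x) else 0‖ ≤ p (x - w) + p (w - x) := by
    split_ifs
    · exact (abs_sub _ _).trans (by rw [abs_of_nonneg (hp0 _), abs_of_nonneg (hp0 _)])
    · simpa using add_nonneg (hp0 (x - w)) (hp0 (w - x))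
  have hsum : Summable fun w => p (x - w) + p (w - x) :=
    ((Equiv.subLeft x).summable_iff.mpr hp).add ((Equiv.subRight x).summable_iff.mpr hp)
  have hs₁ := hsum.of_norm_bounded fun w => hbound (π (w + u) = π (x + u)) w
  have hs₂ := hsum.of_norm_bounded fun w => hbound (π w = π x) w
  have hshifted : ∑' w, (if π (w + u) = π (x + u) then p (x - w) - p (w - x) else 0) = 0 := by
    have h := (Equiv.addRight u).tsum_eq
      fun z => if π z = π (x + u) then p (x + u - z) - p (z - (x + u)) else 0
    simp only [Equiv.coe_addRight, add_sub_add_right_eq_sub] at h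
    rw [h, hdrift]
  set S : G → ℝ := fun w => (p u - p (-u)) *
    ((if π (w + u) = π (x + u) then p (x - w) - p (w - x) else 0)
      - if π w = π x then p (x - w) - p (w - x) else 0)
  have hS : HasSum S 0 := by
    have h := ((hs₁.sub hs₂).mul_left (p u - p (-u))).hasSum
    rwa [tsum_mul_left, Summable.tsum_sub hs₁ hs₂, hshifted, hdrift x, sub_zero, mul_zero] at h
  have hSw :=
    congrFun ((hasSum_zero_iff_of_nonneg (levelSet_shift_term_nonneg hp0 hπ hdich hx)).1 hS) w
  exact sub_eq_zero.1 ((mul_eq_zero.1 hSw).resolve_left (sub_ne_zero.2 hu))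

lemma apply_add_add_eq_of_apply_add_eq (hp0 : ∀ z, 0 ≤ p z) (hp : Summable p) (hπ : ∀ x, 0 < π x)
    (hdich : ∀ x t, π (x + t) = π x ∨ p t * π x = p (-t) * π (x + t))
    (hdrift : ∀ x, ∑' z, (if π z = π x then p (x - z) - p (z - x) else 0) = 0)
    {u x : G} (hu : p u ≠ p (-u)) (hx : π (x + u) = π x) {v : G} (hv : 0 < p v ∨ 0 < p (-v)) :
    π (x + v + u) = π (x + v) := by
  have hcomm : x + u + v = x + v + u := add_right_comm x u v
  by_cases hsymm : p (-v) = p v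
  · have hv' : 0 < p v := hv.elim id (hsymm ▸ ·)
    have h := apply_add_eq_of_neg_eq hp0 hπ hdich hv' hsymm
    rw [← hcomm, h, hx, h]
  have hlevel := levelSet_shift hp0 hp hπ hdich hdrift hu hx (x + v)
  rw [add_sub_cancel_left, sub_add_cancel_left] at hlevel
  have hD : p (-v) - p v ≠ 0 := sub_ne_zero.2 hsymm
  by_cases hflat : π (x + v) = π x
  · rw [if_pos hflat] at hlevel
    have h : π (x + v + u) = π (x + u) := by
      by_contra h
      rw [if_neg h] at hlevel
      exact hD hlevel.symm
    rw [h, hx, hflat]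
  · rw [if_neg hflat] at hlevel
    have h : π (x + v + u) ≠ π (x + u) := fun h => hD (by rwa [if_pos h] at hlevel)
    have e₁ := (hdich x v).resolve_left hflat
    have e₂ := (hdich (x + u) v).resolve_left (by rw [hcomm]; exact h)
    rw [hcomm, hx, e₁] at e₂
    have hneg : p (-v) ≠ 0 := fun h0 => hsymm (by
      rw [h0, zero_mul] at e₁
      rw [h0, eq_comm]
      exact (mul_eq_zero.1 e₁).resolve_right (hπ x).ne')
    exact (mul_left_cancel₀ hneg e₂).symm

lemma apply_add_eq_iff_of_mem_closure (hp0 : ∀ z, 0 ≤ p z) (hp : Summable p) (hπ : ∀ x, 0 < π x)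
    (hdich : ∀ x t, π (x + t) = π x ∨ p t * π x = p (-t) * π (x + t))
    (hdrift : ∀ x, ∑' z, (if π z = π x then p (x - z) - p (z - x) else 0) = 0)
    {ι : Type*} {u : ι → G} (hu : ∀ i, 0 < p (u i)) {w : G} (hw : 0 < p w) {y : G}
    (hy : y ∈ AddSubgroup.closure (Set.range u)) (x : G) :
    π (x + w) = π x ↔ π (x + y + w) = π (x + y) := by
  by_cases hsymm : p (-w) = p w
  · simp only [apply_add_eq_of_neg_eq hp0 hπ hdich hw hsymm]
  have hw' : p w ≠ p (-w) := Ne.symm hsymm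
  induction hy using AddSubgroup.closure_induction generalizing x with
  | mem v hv =>
    obtain ⟨i, rfl⟩ := hv
    refine ⟨fun h => apply_add_add_eq_of_apply_add_eq hp0 hp hπ hdich hdrift hw' h (Or.inl (hu i)),
      fun h => ?_⟩
    have h' := apply_add_add_eq_of_apply_add_eq hp0 hp hπ hdich hdrift hw' h (v := -u i)
      (Or.inr (by rw [neg_neg]; exact hu i))
    rwa [add_neg_cancel_right] at h'
  | zero => simp only [add_zero]
  | add y z _ _ ihy ihz => exact (ihy x).trans (by rw [← add_assoc]; exact ihz (x + y))
  | neg y _ ih =>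
    have h := ih (x + -y)
    rw [neg_add_cancel_right] at h
    exact h.symm

lemma exists_apply_add_eq_mul (hp0 : ∀ z, 0 ≤ p z) (hp : Summable p) (hπ : ∀ x, 0 < π x)
    (hdich : ∀ x t, π (x + t) = π x ∨ p t * π x = p (-t) * π (x + t))
    (hdrift : ∀ x, ∑' z, (if π z = π x then p (x - z) - p (z - x) else 0) = 0)
    {ι : Type*} {u : ι → G} (hu : ∀ i, 0 < p (u i)) {w : G} (hw : 0 < p w) :
    ∃ r, (r = 1 ∨ 0 < p (-w) ∧ r = p w / p (-w)) ∧ r ≠ 0 ∧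
      ∀ y ∈ AddSubgroup.closure (Set.range u), π (y + w) = r * π y := by
  have hiff {y} (hy : y ∈ AddSubgroup.closure (Set.range u)) :=
    apply_add_eq_iff_of_mem_closure hp0 hp hπ hdich hdrift hu hw hy 0
  simp only [zero_add] at hiff
  by_cases h0 : π w = π 0
  · exact ⟨1, Or.inl rfl, one_ne_zero, fun y hy => by rw [one_mul, ← (hiff hy).1 h0]⟩
  obtain ⟨hneg, -⟩ := pos_and_apply_add_eq_div_mul hp0 hπ hdich hw (by rwa [zero_add])
  exact ⟨p w / p (-w), Or.inr ⟨hneg, rfl⟩, (div_pos hw hneg).ne', fun y hy =>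
    (pos_and_apply_add_eq_div_mul hp0 hπ hdich hw fun h => h0 ((hiff hy).2 h)).2⟩

end LevelSets

theorem apply_sum_zsmul_eq_mul_prod_zpow {G ι K : Type*} [AddCommGroup G] [Fintype ι] [Field K]
    (φ : G → K) (u : ι → G) (ρ : ι → K) (hρ : ∀ i, ρ i ≠ 0)
    (h : ∀ i, ∀ y ∈ AddSubgroup.closure (Set.range u), φ (y + u i) = ρ i * φ y) (n : ι → ℤ) :
    φ (∑ i, n i • u i) = φ 0 * ∏ i, ρ i ^ n i := by
  classical
  set L := AddSubgroup.closure (Set.range u)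
  have hmem (i : ι) : u i ∈ L := AddSubgroup.subset_closure (Set.mem_range_self i)
  have hzsmul (i : ι) {y : G} (hy : y ∈ L) (m : ℤ) : φ (y + m • u i) = ρ i ^ m * φ y := by
    induction m using Int.induction_on with
    | zero => simp
    | succ m ih =>
      rw [add_smul, one_smul, ← add_assoc, h i _ (L.add_mem hy (L.zsmul_mem (hmem i) m)), ih,
        zpow_add_one₀ (hρ i)]
      ring
    | pred m ih =>
      have hstep := h i _ (L.add_mem hy (L.zsmul_mem (hmem i) (-m - 1)))
      rw [add_assoc, ← add_one_zsmul, sub_add_cancel, ih] at hstep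
      rw [zpow_sub_one₀ (hρ i), mul_right_comm, hstep, mul_comm, inv_mul_cancel_left₀ (hρ i)]
  have hfin (s : Finset ι) : φ (∑ i ∈ s, n i • u i) = φ 0 * ∏ i ∈ s, ρ i ^ n i := by
    induction s using Finset.induction_on with
    | empty => simp
    | insert a s ha ih =>
      rw [Finset.sum_insert ha, Finset.prod_insert ha, add_comm,
        hzsmul a (L.sum_mem fun i _ => L.zsmul_mem (hmem i) (n i)), ih]
      ring
  exact hfin Finset.univ

theorem stationary_product_multi_exponent {d k : ℕ} (p : Zd d → ℝ)
    (hp0 : ∀ z, 0 ≤ p z) (hp1 : ∑' z : Zd d, p z = 1)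
    (α : Zd d → ℝ) (hα : ∀ x, α x ∈ Set.Ioo (0 : ℝ) 1)
    (μ : Measure (Conf d)) (hμ : IsProductWith α μ) (hstat : IsStationary p μ)
    (u : Fin k → Zd d) (hu : ∀ i, 0 < p (u i))
    (lam : Fin k → ℝ)
    (hlam : ∀ i, (0 < p (-(u i)) → lam i = p (u i) / p (-(u i))) ∧
                 (p (-(u i)) = 0 → lam i = 1)) :
    ∃ ρ : Fin k → ℝ, (∀ i, ρ i = lam i ∨ ρ i = 1) ∧
      ∀ n : Fin k → ℤ,
        pifun α (∑ i, n i • u i) = pifun α 0 * ∏ i, ρ i ^ (n i) := by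
  have hp : Summable p := by
    by_contra h
    simp [tsum_eq_zero_of_not_summable h] at hp1
  have hdich := pifun_add_eq_or_balance hp0 hp hα hμ hstat
  have hdrift := tsum_levelSet_drift_eq_zero hp0 hp hα hμ hstat
  choose ρ hρ hρ0 hρu using fun i =>
    exists_apply_add_eq_mul hp0 hp (pifun_pos hα) hdich hdrift hu (hu i)
  refine ⟨ρ, fun i => ?_, apply_sum_zsmul_eq_mul_prod_zpow _ u ρ hρ0 hρu⟩
  rcases hρ i with h | ⟨hneg, h⟩
  · exact Or.inr h
  · exact Or.inl (h.trans ((hlam i).1 hneg).symm)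

end ExclusionPaper
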